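/- Let p, e be C² real-valued functions and s a C² real-valued function on (0,∞)² satisfying Gibbs' relation, and suppose the monoatomic gas relation p(ρ,θ) = (2/3)·ρ·e(ρ,θ) holds for all ρ, θ > 0. Then p satisfies the Euler-type first-order partial differential equation 3ρ·∂p/∂ρ(ρ,θ) + 2θ·∂p/∂θ(ρ,θ) = 5·p(ρ,θ) for all ρ, θ > 0. -/

import Mathlib

/-! Differentiating the two halves of Gibbs' relation crosswise and using the symmetry of the second
derivatives of `e` and `s` yields the Maxwell relation `∂s/∂ρ = -(∂p/∂θ)/ρ²`; inserted back into
Gibbs' relation it gives `ρ² ∂e/∂ρ = p - θ ∂p/∂θ`. For a monoatomic gas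
`3ρ ∂p/∂ρ = 2ρe + 2ρ² ∂e/∂ρ`, and `2ρe = 3p` turns this into `5p - 2θ ∂p/∂θ`. -/

open Filter Function Topology

section Lines

variable {E : Type*} [NormedAddCommGroup E] [NormedSpace ℝ E] {x y : ℝ}

theorem hasDerivAt_comp_prodMk_fst {F : ℝ × ℝ → E} (hF : DifferentiableAt ℝ F (x, y)) :
    HasDerivAt (fun r => F (r, y)) (fderiv ℝ F (x, y) (1, 0)) x :=
  hF.hasFDerivAt.comp_hasDerivAt x ((hasDerivAt_id x).prodMk (hasDerivAt_const x y))

theorem hasDerivAt_comp_prodMk_snd {F : ℝ × ℝ → E} (hF : DifferentiableAt ℝ F (x, y)) :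
    HasDerivAt (fun t => F (x, t)) (fderiv ℝ F (x, y) (0, 1)) y :=
  hF.hasFDerivAt.comp_hasDerivAt y ((hasDerivAt_const y x).prodMk (hasDerivAt_id y))

theorem eventually_prodMk_fst_mem {U : Set (ℝ × ℝ)} (hU : U ∈ 𝓝 (x, y)) :
    ∀ᶠ r in 𝓝 x, (r, y) ∈ U :=
  (continuous_id.prodMk continuous_const).continuousAt.preimage_mem_nhds hU

theorem eventually_prodMk_snd_mem {U : Set (ℝ × ℝ)} (hU : U ∈ 𝓝 (x, y)) :
    ∀ᶠ t in 𝓝 y, (x, t) ∈ U :=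
  (continuous_const.prodMk continuous_id).continuousAt.preimage_mem_nhds hU

end Lines

section MixedPartials

variable {f : ℝ → ℝ → ℝ} {U : Set (ℝ × ℝ)} {x y : ℝ}

theorem deriv_fst_eventuallyEq_fderiv (hU : IsOpen U) (hf : DifferentiableOn ℝ (uncurry f) U)
    (hx : (x, y) ∈ U) :
    (fun t => deriv (fun r => f r t) x) =ᶠ[𝓝 y] fun t => fderiv ℝ (uncurry f) (x, t) (1, 0) :=
  (eventually_prodMk_snd_mem (hU.mem_nhds hx)).mono fun _ ht =>
    (hasDerivAt_comp_prodMk_fst (hf.differentiableAt (hU.mem_nhds ht))).deriv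

theorem deriv_snd_eventuallyEq_fderiv (hU : IsOpen U) (hf : DifferentiableOn ℝ (uncurry f) U)
    (hx : (x, y) ∈ U) :
    (fun r => deriv (fun t => f r t) y) =ᶠ[𝓝 x] fun r => fderiv ℝ (uncurry f) (r, y) (0, 1) :=
  (eventually_prodMk_fst_mem (hU.mem_nhds hx)).mono fun _ hr =>
    (hasDerivAt_comp_prodMk_snd (hf.differentiableAt (hU.mem_nhds hr))).deriv

theorem differentiableAt_fderiv_of_contDiffOn (hU : IsOpen U)
    (hf : ContDiffOn ℝ 2 (uncurry f) U) (hx : (x, y) ∈ U) :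
    DifferentiableAt ℝ (fderiv ℝ (uncurry f)) (x, y) :=
  ((hf.contDiffAt (hU.mem_nhds hx)).fderiv_right (m := 1) (by norm_num)).differentiableAt
    one_ne_zero

theorem hasDerivAt_deriv_snd_of_contDiffOn (hU : IsOpen U) (hf : ContDiffOn ℝ 2 (uncurry f) U)
    (hx : (x, y) ∈ U) :
    HasDerivAt (fun r => deriv (fun t => f r t) y)
      (fderiv ℝ (fderiv ℝ (uncurry f)) (x, y) (1, 0) (0, 1)) x := by
  have h := (hasDerivAt_comp_prodMk_fst (differentiableAt_fderiv_of_contDiffOn hU hf hx)).clm_apply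
    (hasDerivAt_const x ((0, 1) : ℝ × ℝ))
  simp only [map_zero, add_zero] at h
  exact h.congr_of_eventuallyEq
    (deriv_snd_eventuallyEq_fderiv hU (hf.differentiableOn two_ne_zero) hx)

theorem hasDerivAt_deriv_fst_of_contDiffOn (hU : IsOpen U) (hf : ContDiffOn ℝ 2 (uncurry f) U)
    (hx : (x, y) ∈ U) :
    HasDerivAt (fun t => deriv (fun r => f r t) x)
      (fderiv ℝ (fderiv ℝ (uncurry f)) (x, y) (1, 0) (0, 1)) y := by
  have h := (hasDerivAt_comp_prodMk_snd (differentiableAt_fderiv_of_contDiffOn hU hf hx)).clm_apply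
    (hasDerivAt_const y ((1, 0) : ℝ × ℝ))
  simp only [map_zero, add_zero] at h
  rw [((hf.contDiffAt (hU.mem_nhds hx)).isSymmSndFDerivAt (by simp)) (1, 0) (0, 1)]
  exact h.congr_of_eventuallyEq
    (deriv_fst_eventuallyEq_fderiv hU (hf.differentiableOn two_ne_zero) hx)

end MixedPartials

section Gibbs

variable {p e s : ℝ → ℝ → ℝ} {U : Set (ℝ × ℝ)} {ρ θ : ℝ}

theorem deriv_entropy_fst_eq_of_gibbs (hU : IsOpen U)
    (he : ContDiffOn ℝ 2 (uncurry e) U) (hs : ContDiffOn ℝ 2 (uncurry s) U)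
    (gibbs_θ : ∀ x ∈ U, x.2 * deriv (fun t => s x.1 t) x.2 = deriv (fun t => e x.1 t) x.2)
    (gibbs_ρ : ∀ x ∈ U,
      x.2 * deriv (fun r => s r x.2) x.1 = deriv (fun r => e r x.2) x.1 - p x.1 x.2 / x.1 ^ 2)
    (hx : (ρ, θ) ∈ U) (hpθ : DifferentiableAt ℝ (fun t => p ρ t) θ) :
    deriv (fun r => s r θ) ρ = -(deriv (fun t => p ρ t) θ / ρ ^ 2) := by
  have hs₂ := hasDerivAt_deriv_snd_of_contDiffOn hU hs hx
  have he₂ := hasDerivAt_deriv_snd_of_contDiffOn hU he hx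
  have hs₁ := hasDerivAt_deriv_fst_of_contDiffOn hU hs hx
  have he₁ := hasDerivAt_deriv_fst_of_contDiffOn hU he hx
  have gibbs_θ_deriv : θ * fderiv ℝ (fderiv ℝ (uncurry s)) (ρ, θ) (1, 0) (0, 1) =
      fderiv ℝ (fderiv ℝ (uncurry e)) (ρ, θ) (1, 0) (0, 1) :=
    (hs₂.const_mul θ).unique <| he₂.congr_of_eventuallyEq <|
      (eventually_prodMk_fst_mem (hU.mem_nhds hx)).mono fun r hr => gibbs_θ (r, θ) hr
  have gibbs_ρ_deriv : 1 * deriv (fun r => s r θ) ρ +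
      θ * fderiv ℝ (fderiv ℝ (uncurry s)) (ρ, θ) (1, 0) (0, 1) =
      fderiv ℝ (fderiv ℝ (uncurry e)) (ρ, θ) (1, 0) (0, 1) - deriv (fun t => p ρ t) θ / ρ ^ 2 :=
    ((hasDerivAt_id' θ).mul hs₁).unique <|
      (he₁.sub (hpθ.hasDerivAt.div_const _)).congr_of_eventuallyEq <|
      (eventually_prodMk_snd_mem (hU.mem_nhds hx)).mono fun t ht => gibbs_ρ (ρ, t) ht
  linear_combination gibbs_ρ_deriv - gibbs_θ_deriv

theorem sq_mul_deriv_energy_fst_eq_of_gibbs (hU : IsOpen U)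
    (he : ContDiffOn ℝ 2 (uncurry e) U) (hs : ContDiffOn ℝ 2 (uncurry s) U)
    (gibbs_θ : ∀ x ∈ U, x.2 * deriv (fun t => s x.1 t) x.2 = deriv (fun t => e x.1 t) x.2)
    (gibbs_ρ : ∀ x ∈ U,
      x.2 * deriv (fun r => s r x.2) x.1 = deriv (fun r => e r x.2) x.1 - p x.1 x.2 / x.1 ^ 2)
    (hx : (ρ, θ) ∈ U) (hρ : ρ ≠ 0) (hpθ : DifferentiableAt ℝ (fun t => p ρ t) θ) :
    ρ ^ 2 * deriv (fun r => e r θ) ρ = p ρ θ - θ * deriv (fun t => p ρ t) θ := by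
  have maxwell := deriv_entropy_fst_eq_of_gibbs hU he hs gibbs_θ gibbs_ρ hx hpθ
  have gibbs := gibbs_ρ (ρ, θ) hx
  rw [maxwell] at gibbs
  field_simp at gibbs
  linear_combination -gibbs

end Gibbs

/-- **Euler-type PDE for the pressure of a monoatomic gas.**
If `p`, `e`, `s` are `C²` on `(0,∞)²`, satisfy Gibbs' relation, and the monoatomic
equation of state `p = (2/3) ρ e` holds, then `3ρ ∂p/∂ρ + 2θ ∂p/∂θ = 5 p`. -/
theorem monoatomic_pressure_pde
    (p e s : ℝ → ℝ → ℝ)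
    (hp : ContDiffOn ℝ 2 (fun x : ℝ × ℝ => p x.1 x.2) {x : ℝ × ℝ | 0 < x.1 ∧ 0 < x.2})
    (he : ContDiffOn ℝ 2 (fun x : ℝ × ℝ => e x.1 x.2) {x : ℝ × ℝ | 0 < x.1 ∧ 0 < x.2})
    (hs : ContDiffOn ℝ 2 (fun x : ℝ × ℝ => s x.1 x.2) {x : ℝ × ℝ | 0 < x.1 ∧ 0 < x.2})
    (gibbs_θ : ∀ ρ θ : ℝ, 0 < ρ → 0 < θ →
      θ * deriv (fun t => s ρ t) θ = deriv (fun t => e ρ t) θ)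
    (gibbs_ρ : ∀ ρ θ : ℝ, 0 < ρ → 0 < θ →
      θ * deriv (fun r => s r θ) ρ = deriv (fun r => e r θ) ρ - p ρ θ / ρ ^ 2)
    (mono : ∀ ρ θ : ℝ, 0 < ρ → 0 < θ → p ρ θ = 2 / 3 * ρ * e ρ θ) :
    ∀ ρ θ : ℝ, 0 < ρ → 0 < θ →
      3 * ρ * deriv (fun r => p r θ) ρ + 2 * θ * deriv (fun t => p ρ t) θ = 5 * p ρ θ := by
  intro ρ θ hρ hθ
  set U : Set (ℝ × ℝ) := {x | 0 < x.1 ∧ 0 < x.2}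
  have hU : IsOpen U := (isOpen_lt continuous_const continuous_fst).inter
    (isOpen_lt continuous_const continuous_snd)
  have hx : (ρ, θ) ∈ U := ⟨hρ, hθ⟩
  have hpθ : DifferentiableAt ℝ (fun t => p ρ t) θ :=
    (hasDerivAt_comp_prodMk_snd ((hp.differentiableOn two_ne_zero).differentiableAt
      (hU.mem_nhds hx))).differentiableAt
  have heρ : DifferentiableAt ℝ (fun r => e r θ) ρ :=
    (hasDerivAt_comp_prodMk_fst ((he.differentiableOn two_ne_zero).differentiableAt
      (hU.mem_nhds hx))).differentiableAt
  have energy := sq_mul_deriv_energy_fst_eq_of_gibbs hU he hs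
    (fun x hx => gibbs_θ x.1 x.2 hx.1 hx.2) (fun x hx => gibbs_ρ x.1 x.2 hx.1 hx.2) hx hρ.ne' hpθ
  have hpρ : deriv (fun r => p r θ) ρ = 2 / 3 * e ρ θ + 2 / 3 * ρ * deriv (fun r => e r θ) ρ := by
    have h := (((hasDerivAt_id' ρ).const_mul (2 / 3 : ℝ)).mul heρ.hasDerivAt).congr_of_eventuallyEq
        ((eventually_prodMk_fst_mem (hU.mem_nhds hx)).mono fun r hr => mono r θ hr.1 hr.2)
    rw [h.deriv]
    ring
  rw [hpρ]
  linear_combination 2 * energy - 3 * mono ρ θ hρ hθ
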